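/- In the polynomial ring ℂ[t₁,t₂,t₃,Z], let P = Z⁴ + t₃Z + t₂ and let y₁ = (128000/19683)(12000t₁³ − 3360t₁t₂²Z² − 3390t₁t₂t₃² − 3120t₁t₂t₃Z³ + 810t₁t₃³Z + 4112t₂³t₃ + 2176t₂³Z³ − 2176t₂²t₃²Z − 119t₂t₃³Z² + 200t₃⁵ + 119t₃⁴Z³), y₂ = (3200/729)(180t₁t₂ − 32t₂²Z − 22t₂t₃Z² − 5t₃³ − 5t₃²Z³), y₃ = (20/3)t₃. Then for every i, j ∈ {1,2,3} there exists a polynomial D ∈ ℂ[t₁,t₂,t₃,Z] such that (∂P/∂Z)·(∂yᵢ/∂tⱼ) − (∂yᵢ/∂Z)·(∂P/∂tⱼ) − (∂P/∂Z)·D lies in the ideal of ℂ[t₁,t₂,t₃,Z] generated by P. (Equivalently: the implicit derivatives ∂yᵢ/∂tⱼ, computed with Z an algebraic function of (t₂,t₃) via P = 0, are polynomials in t₁,t₂,t₃,Z.) -/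

import Mathlib

/-!
Modulo `P`, the required congruence says that `∂yᵢ/∂Z · ∂P/∂tⱼ` is a multiple of `∂P/∂Z`,
i.e. lies in the ideal `(P, ∂P/∂Z)`. This already holds for `∂yᵢ/∂Z` itself, as shown by explicit
certificates `∂yᵢ/∂Z = a·P + b·∂P/∂Z`; then `D = ∂yᵢ/∂tⱼ − b·∂P/∂tⱼ` works.
-/

open MvPolynomial

noncomputable section

/-- The polynomial `P = Z⁴ + t₃Z + t₂` in `ℂ[t₁,t₂,t₃,Z]` (variables `X 0, X 1, X 2, X 3`
are `t₁, t₂, t₃, Z`). -/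
def PH31 : MvPolynomial (Fin 4) ℂ := X 3 ^ 4 + X 2 * X 3 + X 1

/-- The `H₃` basic invariants in the flat coordinates of `(H₃)′`, as elements of
`ℂ[t₁,t₂,t₃,Z]`. -/
def YH31 : Fin 3 → MvPolynomial (Fin 4) ℂ :=
  ![C ((128000 : ℂ) / 19683) *
      (12000 * X 0 ^ 3 - 3360 * X 0 * X 1 ^ 2 * X 3 ^ 2 - 3390 * X 0 * X 1 * X 2 ^ 2
        - 3120 * X 0 * X 1 * X 2 * X 3 ^ 3 + 810 * X 0 * X 2 ^ 3 * X 3 + 4112 * X 1 ^ 3 * X 2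
        + 2176 * X 1 ^ 3 * X 3 ^ 3 - 2176 * X 1 ^ 2 * X 2 ^ 2 * X 3
        - 119 * X 1 * X 2 ^ 3 * X 3 ^ 2 + 200 * X 2 ^ 5 + 119 * X 2 ^ 4 * X 3 ^ 3),
    C ((3200 : ℂ) / 729) *
      (180 * X 0 * X 1 - 32 * X 1 ^ 2 * X 3 - 22 * X 1 * X 2 * X 3 ^ 2 - 5 * X 2 ^ 3
        - 5 * X 2 ^ 2 * X 3 ^ 3),
    C ((20 : ℂ) / 3) * X 2]

lemma MvPolynomial.pderiv_ofNat {R σ : Type*} [CommSemiring R] (i : σ) (n : ℕ) [n.AtLeastTwo] :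
    pderiv i (no_index (OfNat.ofNat n) : MvPolynomial σ R) = 0 :=
  (pderiv i).map_natCast n

lemma MvPolynomial.exists_implicit_pderiv_of_pderiv_mem_span {σ R : Type*} [CommRing R]
    {P y : MvPolynomial σ R} {z : σ} (h : pderiv z y ∈ Ideal.span {P, pderiv z P}) (j : σ) :
    ∃ D, pderiv z P * pderiv j y - pderiv z y * pderiv j P - pderiv z P * D ∈ Ideal.span {P} := by
  obtain ⟨a, b, hab⟩ := Ideal.mem_span_pair.mp h
  refine ⟨pderiv j y - b * pderiv j P, Ideal.mem_span_singleton'.mpr ⟨-(a * pderiv j P), ?_⟩⟩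
  rw [← hab]
  ring

lemma pderiv_three_YH31_mem_span (i : Fin 3) :
    pderiv 3 (YH31 i) ∈ Ideal.span {PH31, pderiv 3 PH31} := by
  rw [Ideal.mem_span_pair]
  fin_cases i <;>
    simp only [PH31, YH31, Fin.reduceFinMk, Matrix.cons_val, map_add, map_sub,
      Derivation.leibniz, Derivation.leibniz_pow, derivation_C, pderiv_ofNat, pderiv_X,
      Pi.single_apply, Fin.reduceEq, if_true, if_false, smul_eq_mul, nsmul_eq_mul]
  · exact ⟨-C ((128000 : ℂ) / 19683) * (6720 * X 0 * X 1 * X 3 + 4320 * X 0 * X 2 * X 3 ^ 2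
        - 6528 * X 1 ^ 2 * X 3 ^ 2 + 952 * X 1 * X 2 ^ 2 - 476 * X 2 ^ 3 * X 3),
      C ((128000 : ℂ) / 19683) * (1680 * X 0 * X 1 * X 3 ^ 2 + 810 * X 0 * X 2 ^ 2
        + 1080 * X 0 * X 2 * X 3 ^ 3 - 1224 * X 1 ^ 2 * X 2 - 1632 * X 1 ^ 2 * X 3 ^ 3
        + 238 * X 1 * X 2 ^ 2 * X 3 - 119 * X 2 ^ 3 * X 3 ^ 2), by ring⟩
  · exact ⟨-C ((3200 : ℂ) / 729) * (32 * X 1 + 20 * X 2 * X 3),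
      C ((3200 : ℂ) / 729) * (8 * X 1 * X 3 + 5 * X 2 * X 3 ^ 2), by ring⟩
  · exact ⟨0, 0, by ring⟩

/-- The implicit derivatives `∂yᵢ/∂tⱼ` (with `Z` an algebraic function of `(t₂,t₃)` via
`P = 0`) are polynomials in `t₁, t₂, t₃, Z`: for each `i, j` there is a polynomial `D` with
`(∂P/∂Z)·(∂yᵢ/∂tⱼ) − (∂yᵢ/∂Z)·(∂P/∂tⱼ) − (∂P/∂Z)·D ∈ (P)`. -/
theorem statement_7 :
    ∀ i : Fin 3, ∀ j : Fin 3, ∃ D : MvPolynomial (Fin 4) ℂ,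
      pderiv (3 : Fin 4) PH31 * pderiv j.castSucc (YH31 i)
          - pderiv (3 : Fin 4) (YH31 i) * pderiv j.castSucc PH31
          - pderiv (3 : Fin 4) PH31 * D
        ∈ Ideal.span {PH31} :=
  fun i j =>
    MvPolynomial.exists_implicit_pderiv_of_pderiv_mem_span (pderiv_three_YH31_mem_span i) j.castSucc
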